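/- Assume f, g, h and each p_i are twice continuously differentiable. Let α > 0 and let (x*, y*) be a KKT point of (Pen(α)) with multipliers λ* ∈ ℝᵐ, μ* ∈ ℝ^q, ν_x*, ν_y* ∈ ℝⁿ, and assume additionally x*_i·y*_i = 0 for all i. Suppose the second-order sufficient condition holds for (Pen(α)) at (x*, y*): for every (dx, dy) ∈ ℝⁿ × ℝⁿ with (dx, dy) ≠ (0, 0) satisfying dx_i = 0 for all i with x*_i = 0 and (ν_x*)_i > 0, dx_i ≥ 0 for all i with x*_i = 0 and (ν_x*)_i = 0, ∇h_j(x*)ᵀdx = 0 for all j, ∇g_i(x*)ᵀdx = 0 for all i ∈ I_g(x*) with λ*_i > 0, ∇g_i(x*)ᵀdx ≤ 0 for all i ∈ I_g(x*) with λ*_i = 0, dy_i = 0 for all i with y*_i = 0 and (ν_y*)_i > 0, and dy_i ≥ 0 for all i with y*_i = 0 and (ν_y*)_i = 0, one has dxᵀ∇²ₓₓL(x*, λ*, μ*) dx + 2α·dxᵀdy + Σ_{i=1}^n p_i″(y*_i)·dy_i² > 0. Then SP-SOSC holds at x*: dᵀ∇²ₓₓL(x*, λ*, μ*) d > 0 for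 every d ∈ C(x*, λ*) with d ≠ 0. -/
import Mathlib


open Filter Topology

noncomputable section

/-- Euclidean n-space. -/
abbrev E (n : ℕ) : Type := EuclideanSpace ℝ (Fin n)

/-- The quadratic form d ↦ dᵀ∇²ₓₓL(x, λ, μ)d, where
∇²ₓₓL = ∇²f + Σᵢ λᵢ∇²gᵢ + Σⱼ μⱼ∇²hⱼ. -/
def hessQ {n m q : ℕ} (f : E n → ℝ) (g : Fin m → E n → ℝ) (h : Fin q → E n → ℝ)
    (lam : Fin m → ℝ) (mu : Fin q → ℝ) (x d : E n) : ℝ :=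
  iteratedFDeriv ℝ 2 f x ![d, d] +
    (∑ i, lam i * iteratedFDeriv ℝ 2 (g i) x ![d, d]) +
    (∑ j, mu j * iteratedFDeriv ℝ 2 (h j) x ![d, d])

/-- Membership in the SP-critical cone C(x*, λ). -/
def inCritCone {n m q : ℕ} (g : Fin m → E n → ℝ) (h : Fin q → E n → ℝ)
    (lam : Fin m → ℝ) (xstar : E n) (d : E n) : Prop :=
  (∀ j, (∑ k, gradient (h j) xstar k * d k) = 0) ∧
  (∀ i, g i xstar = 0 → 0 < lam i → (∑ k, gradient (g i) xstar k * d k) = 0) ∧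
  (∀ i, g i xstar = 0 → lam i = 0 → (∑ k, gradient (g i) xstar k * d k) ≤ 0) ∧
  (∀ i, xstar i = 0 → d i = 0)

/-- SOSC for the penalized problem (Pen(α)) at a feasible KKT
point implies SP-SOSC. -/
theorem stmt_16 {n m q : ℕ} (hn : 1 ≤ n) {ρ : ℝ} (hρ : 0 < ρ)
    (f : E n → ℝ) (g : Fin m → E n → ℝ) (h : Fin q → E n → ℝ)
    (hf : ContDiff ℝ 2 f) (hg : ∀ i, ContDiff ℝ 2 (g i)) (hh : ∀ j, ContDiff ℝ 2 (h j))
    (p : Fin n → ℝ → ℝ) (s : Fin n → ℝ)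
    (hp : ∀ i, ContDiff ℝ 2 (p i))
    (hconv : ∀ i, ConvexOn ℝ Set.univ (p i))
    (hspos : ∀ i, 0 < s i)
    (hmin : ∀ i t, p i (s i) ≤ p i t)
    (hstrict : ∀ i t, t ≠ s i → p i (s i) < p i t)
    (hscale : ∀ i, p i 0 - p i (s i) = ρ)
    {α : ℝ} (hα : 0 < α)
    (xstar ystar : E n) (lam : Fin m → ℝ) (mu : Fin q → ℝ) (νx νy : Fin n → ℝ)
    -- (x*, y*) is a KKT point of (Pen(α)) with multipliers λ*, μ*, νx*, νy*:
    (hgx : ∀ i, g i xstar ≤ 0) (hhx : ∀ j, h j xstar = 0)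
    (hxnn : ∀ i, 0 ≤ xstar i) (hynn : ∀ i, 0 ≤ ystar i)
    (hlamnn : ∀ i, 0 ≤ lam i) (hlamcompl : ∀ i, lam i * g i xstar = 0)
    (hνxnn : ∀ i, 0 ≤ νx i) (hνxcompl : ∀ i, νx i * xstar i = 0)
    (hνynn : ∀ i, 0 ≤ νy i) (hνycompl : ∀ i, νy i * ystar i = 0)
    (hstat1 : ∀ k, gradient f xstar k + (∑ i, lam i * gradient (g i) xstar k) +
        (∑ j, mu j * gradient (h j) xstar k) + α * ystar k - νx k = 0)
    (hstat2 : ∀ i, deriv (p i) (ystar i) + α * xstar i - νy i = 0)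
    -- additionally (x*, y*) is feasible for (SPOcp):
    (hcompl : ∀ i, xstar i * ystar i = 0)
    -- SOSC for (Pen(α)) at (x*, y*):
    (hsosc : ∀ dx dy : E n, (dx, dy) ≠ 0 →
      (∀ i, xstar i = 0 → 0 < νx i → dx i = 0) →
      (∀ i, xstar i = 0 → νx i = 0 → 0 ≤ dx i) →
      (∀ j, (∑ k, gradient (h j) xstar k * dx k) = 0) →
      (∀ i, g i xstar = 0 → 0 < lam i → (∑ k, gradient (g i) xstar k * dx k) = 0) →
      (∀ i, g i xstar = 0 → lam i = 0 → (∑ k, gradient (g i) xstar k * dx k) ≤ 0) →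
      (∀ i, ystar i = 0 → 0 < νy i → dy i = 0) →
      (∀ i, ystar i = 0 → νy i = 0 → 0 ≤ dy i) →
      0 < hessQ f g h lam mu xstar dx + 2 * α * (∑ i, dx i * dy i) +
          ∑ i, deriv (deriv (p i)) (ystar i) * (dy i) ^ 2) :
    -- SP-SOSC holds at x*:
    ∀ d : E n, inCritCone g h lam xstar d → d ≠ 0 →
      0 < hessQ f g h lam mu xstar d := by
  intro d hd hd0
  obtain ⟨hc1, hc2, hc3, hc4⟩ := hd
  have key := hsosc d 0 (by simp [Prod.ext_iff, hd0])
    (fun i hx _ => hc4 i hx)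
    (fun i hx _ => le_of_eq (hc4 i hx).symm)
    hc1 hc2 hc3
    (fun i _ _ => rfl)
    (fun i _ _ => le_refl _)
  simpa using key
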